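/- arXiv:2210.15064 — 2 statements merged into one kernel-verified Lean document; each statement's English description precedes it below -/
import Mathlib

section
/- Let Θ and G be finite-dimensional real inner product spaces, let K be a positive integer, let C ⊆ Θ be a nonempty closed convex set, let L_1,…,L_K : Θ → G be continuous linear maps not all zero, let y_1,…,y_K ∈ G, let ω_1,…,ω_K ∈ (0,1] with ω_1+⋯+ω_K = 1, and let R : G → G be firmly nonexpansive. Suppose the variational inequality problem — find θ ∈ C such that for all ϑ ∈ C, ⟨ϑ − θ, Σ_{k=1}^K ω_k L_k*(R(L_k θ) − y_k)⟩ ≥ 0 — has at least one solution. Let (𝕂_j)_{1≤j≤J} be a partition of {1,…,K} into nonempty sets, let γ ∈ (0, 2/max_{1≤k≤K}‖L_k‖²), let θ_0 ∈ Θ, let θ̄_{1,0},…,θ̄_{J,0} ∈ Θ, and set θ̄_0 = Σ_{j=1}^J θ̄_{j,0}. For each n ∈ ℕ select j_n ∈ {1,…,J}, and define: θ̄_{j_n,n+1} = Σ_{k∈𝕂_{j_n}} ω_k (θ_n − γ L_k*(R(L_k θ_n) − y_k)); θ̄_{j,n+1} = θ̄_{j,n} for j ≠ j_n; θ̄_{n+1}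 = θ̄_n + θ̄_{j_n,n+1} − θ̄_{j_n,n}; and θ_{n+1} = P_C(θ̄_{n+1}). If there exists P ∈ ℕ such that for every n ∈ ℕ, {j_n, j_{n+1}, …, j_{n+P−1}} = {1,…,J}, then the sequence (θ_n)_{n∈ℕ} converges to a solution of the variational inequality problem. -/
/-!
Write `Fₖ x = Lₖ*(R (Lₖ x) - yₖ)`, `Tₖ x = x - γ Fₖ x`, and let `a(n, k) ∈ [n - Q, n)` be the last
iteration at which the batch containing `k` was refreshed. Once every batch has been visited,
`θ̄ₙ = ∑ₖ ωₖ Tₖ θ_{a(n,k)}`, and the batch refreshed at step `n - 1` has delay exactly `n - 1`.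
Firm nonexpansiveness of `R` makes `Fₖ` cocoercive with constant `1 / ‖Lₖ‖²`, whence
`‖Tₖ x - Tₖ x'‖² + γ (2 / M - γ) ‖Fₖ x - Fₖ x'‖² ≤ ‖x - x'‖²` for `M = maxₖ ‖Lₖ‖²`. Combined with
firm nonexpansiveness of `P_C` and the variance identity for `∑ₖ ωₖ`, this gives, for every fixed
point `θ'` of `P_C ∘ ∑ₖ ωₖ Tₖ` (the fixed points are the solutions of the variational inequality),
a delayed Fejér inequality `‖θₙ - θ'‖² + sₙ ≤ ∑ₖ ωₖ ‖θ_{a(n,k)} - θ'‖²`.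
A window-maximum argument shows that such distances converge and that the slack `sₙ` tends to `0`.
The slack controls the spread of the delayed iterates, so every cluster point of `(θₙ)` is again a
fixed point, and convergence of the distances to that cluster point forces convergence of `(θₙ)`.
-/

open scoped RealInnerProductSpace Topology NNReal
open Filter Finset

section NormedAddCommGroup

variable {E : Type*} [NormedAddCommGroup E]
lemma tendsto_of_mul_norm_sub_sq_le {x : ℕ → E} {y : E} {s : ℕ → ℝ} {c : ℝ} (hc : 0 < c)
    (hs : Tendsto s atTop (𝓝 0)) (h : ∀ n, c * ‖x n - y‖ ^ 2 ≤ s n) :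
    Tendsto x atTop (𝓝 y) := by
  have hsq : Tendsto (fun n => ‖x n - y‖ ^ 2) atTop (𝓝 0) :=
    squeeze_zero (fun n => sq_nonneg _) (fun n => (le_div_iff₀' hc).2 (h n))
      (by simpa using hs.div_const c)
  rw [tendsto_iff_norm_sub_tendsto_zero]
  simpa [Real.sqrt_sq (norm_nonneg _)] using hsq.sqrt

lemma tendsto_of_tendsto_norm_sub_sq_of_subseq {x : ℕ → E} {y : E} {ℓ : ℝ}
    (hℓ : Tendsto (fun n => ‖x n - y‖ ^ 2) atTop (𝓝 ℓ)) {φ : ℕ → ℕ} (hφ : StrictMono φ)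
    (hxφ : Tendsto (x ∘ φ) atTop (𝓝 y)) : Tendsto x atTop (𝓝 y) := by
  have hφℓ : Tendsto (fun i => ‖x (φ i) - y‖ ^ 2) atTop (𝓝 0) := by
    simpa using ((tendsto_iff_norm_sub_tendsto_zero.1 hxφ).pow 2)
  have hℓ0 : ℓ = 0 := tendsto_nhds_unique (hℓ.comp hφ.tendsto_atTop) hφℓ
  exact tendsto_of_mul_norm_sub_sq_le one_pos (hℓ0 ▸ hℓ) fun n => (one_mul _).le

end NormedAddCommGroup

section InnerProductSpace

variable {E : Type*} [NormedAddCommGroup E] [InnerProductSpace ℝ E]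

lemma norm_sum_smul_sq_add_sum_mul_norm_sub_sq {ι : Type*} (s : Finset ι) {w : ι → ℝ}
    (hw1 : ∑ i ∈ s, w i = 1) (v : ι → E) :
    ‖∑ i ∈ s, w i • v i‖ ^ 2 + ∑ i ∈ s, w i * ‖v i - ∑ k ∈ s, w k • v k‖ ^ 2 =
      ∑ i ∈ s, w i * ‖v i‖ ^ 2 := by
  set m := ∑ k ∈ s, w k • v k
  have hm : ∑ i ∈ s, w i * ⟪v i, m⟫ = ‖m‖ ^ 2 := by
    simp only [← real_inner_self_eq_norm_sq, m, sum_inner, real_inner_smul_left]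
  have hterm : ∀ i, w i * ‖v i - m‖ ^ 2 = w i * ‖v i‖ ^ 2 - 2 * (w i * ⟪v i, m⟫) + w i * ‖m‖ ^ 2 :=
    fun i => by rw [norm_sub_sq_real]; ring
  rw [sum_congr rfl fun i _ => hterm i, sum_add_distrib, sum_sub_distrib, ← mul_sum, ← sum_mul, hw1,
    hm]
  ring

def FirmlyNonexpansive (R : E → E) : Prop :=
  ∀ z₁ z₂, ‖R z₁ - R z₂‖ ^ 2 ≤ ⟪z₁ - z₂, R z₁ - R z₂⟫

lemma FirmlyNonexpansive.norm_sub_sq_add_le {R : E → E} (hR : FirmlyNonexpansive R) (z₁ z₂ : E) :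
    ‖R z₁ - R z₂‖ ^ 2 + ‖(z₁ - R z₁) - (z₂ - R z₂)‖ ^ 2 ≤ ‖z₁ - z₂‖ ^ 2 := by
  rw [show (z₁ - R z₁) - (z₂ - R z₂) = (z₁ - z₂) - (R z₁ - R z₂) by abel,
    norm_sub_sq_real (z₁ - z₂)]
  linarith [hR z₁ z₂]

lemma lipschitzWith_of_norm_sub_sq_le_mul_inner {f : E → E} {M : ℝ≥0}
    (hf : ∀ x₁ x₂, ‖f x₁ - f x₂‖ ^ 2 ≤ M * ⟪x₁ - x₂, f x₁ - f x₂⟫) : LipschitzWith M f := by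
  refine LipschitzWith.of_dist_le_mul fun x₁ x₂ => ?_
  rw [dist_eq_norm, dist_eq_norm]
  rcases (norm_nonneg (f x₁ - f x₂)).eq_or_lt with h | h
  · rw [← h]; positivity
  · refine le_of_mul_le_mul_right ?_ h
    calc ‖f x₁ - f x₂‖ * ‖f x₁ - f x₂‖ = ‖f x₁ - f x₂‖ ^ 2 := by ring
      _ ≤ M * ⟪x₁ - x₂, f x₁ - f x₂⟫ := hf x₁ x₂
      _ ≤ M * (‖x₁ - x₂‖ * ‖f x₁ - f x₂‖) := by gcongr; exact real_inner_le_norm _ _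
      _ = _ := by ring

lemma FirmlyNonexpansive.continuous {R : E → E} (hR : FirmlyNonexpansive R) : Continuous R :=
  (lipschitzWith_of_norm_sub_sq_le_mul_inner (M := 1) fun z₁ z₂ => by
    simpa using hR z₁ z₂).continuous

lemma norm_sub_smul_sq_add_le {u v : E} {M γ : ℝ} (hM : 0 < M) (hγ : 0 ≤ γ)
    (hv : ‖v‖ ^ 2 ≤ M * ⟪u, v⟫) : ‖u - γ • v‖ ^ 2 + γ * (2 / M - γ) * ‖v‖ ^ 2 ≤ ‖u‖ ^ 2 := by
  have hv' : ‖v‖ ^ 2 / M ≤ ⟪u, v⟫ := (div_le_iff₀' hM).2 hv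
  rw [norm_sub_sq_real, real_inner_smul_right, norm_smul, Real.norm_of_nonneg hγ, mul_pow]
  have := mul_le_mul_of_nonneg_left hv' hγ
  have e : γ * (2 / M - γ) * ‖v‖ ^ 2 = 2 * (γ * (‖v‖ ^ 2 / M)) - γ ^ 2 * ‖v‖ ^ 2 := by ring
  linarith

lemma norm_adjoint_sub_sq_le_mul_inner {F : Type*} [NormedAddCommGroup F] [InnerProductSpace ℝ F]
    [CompleteSpace E] [CompleteSpace F] (L : E →L[ℝ] F) {R : F → F} (hR : FirmlyNonexpansive R)
    (y : F) {M : ℝ} (hM : ‖L‖ ^ 2 ≤ M) (x₁ x₂ : E) :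
    ‖L.adjoint (R (L x₁) - y) - L.adjoint (R (L x₂) - y)‖ ^ 2 ≤
      M * ⟪x₁ - x₂, L.adjoint (R (L x₁) - y) - L.adjoint (R (L x₂) - y)⟫ := by
  set v := R (L x₁) - R (L x₂) with hv_def
  have hv : L.adjoint (R (L x₁) - y) - L.adjoint (R (L x₂) - y) = L.adjoint v := by
    rw [← map_sub, hv_def, sub_sub_sub_cancel_right]
  have hinner : ‖v‖ ^ 2 ≤ ⟪x₁ - x₂, L.adjoint v⟫ := by
    rw [ContinuousLinearMap.adjoint_inner_right, map_sub]; exact hR _ _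
  rw [hv]
  calc ‖L.adjoint v‖ ^ 2 ≤ (‖L‖ * ‖v‖) ^ 2 := by
        gcongr
        simpa using L.adjoint.le_opNorm v
    _ = ‖L‖ ^ 2 * ‖v‖ ^ 2 := mul_pow _ _ _
    _ ≤ M * ⟪x₁ - x₂, L.adjoint v⟫ :=
        mul_le_mul hM hinner (sq_nonneg _) ((sq_nonneg _).trans hM)

def IsMetricProjection (C : Set E) (P : E → E) : Prop :=
  ∀ x, P x ∈ C ∧ ∀ c ∈ C, ‖x - P x‖ ≤ ‖x - c‖

namespace IsMetricProjection

variable {C : Set E} {P : E → E}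

lemma inner_le_zero (hP : IsMetricProjection C P) (hC : Convex ℝ C) (x : E) {c : E}
    (hc : c ∈ C) : ⟪x - P x, c - P x⟫ ≤ 0 := by
  have : Nonempty C := ⟨⟨P x, (hP x).1⟩⟩
  refine (norm_eq_iInf_iff_real_inner_le_zero hC (hP x).1).1 ?_ c hc
  exact le_antisymm (le_ciInf fun c => (hP x).2 c c.2)
    (ciInf_le ⟨0, by rintro _ ⟨c, rfl⟩; positivity⟩ (⟨P x, (hP x).1⟩ : C))

lemma eq_iff (hP : IsMetricProjection C P) (hC : Convex ℝ C) {x p : E} :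
    P x = p ↔ p ∈ C ∧ ∀ c ∈ C, ⟪x - p, c - p⟫ ≤ 0 := by
  refine ⟨by rintro rfl; exact ⟨(hP x).1, fun c hc => hP.inner_le_zero hC x hc⟩, ?_⟩
  rintro ⟨hp, hchar⟩
  have h₁ := hP.inner_le_zero hC x hp
  have h₂ := hchar (P x) (hP x).1
  have e : ⟪p - P x, p - P x⟫ = ⟪x - P x, p - P x⟫ + ⟪x - p, P x - p⟫ := by
    simp only [inner_sub_left, inner_sub_right, real_inner_comm]; ring
  exact (sub_eq_zero.1 (real_inner_self_nonpos.1 (by linarith))).symm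

lemma firmlyNonexpansive (hP : IsMetricProjection C P) (hC : Convex ℝ C) :
    FirmlyNonexpansive P := by
  intro x₁ x₂
  have h₁ := hP.inner_le_zero hC x₁ (hP x₂).1
  have h₂ := hP.inner_le_zero hC x₂ (hP x₁).1
  rw [← real_inner_self_eq_norm_sq]
  simp only [inner_sub_left, inner_sub_right, real_inner_comm] at h₁ h₂ ⊢
  linarith

lemma sub_smul_eq_self_iff (hP : IsMetricProjection C P) (hC : Convex ℝ C) {γ : ℝ} (hγ : 0 < γ)
    {x v : E} : P (x - γ • v) = x ↔ x ∈ C ∧ ∀ c ∈ C, 0 ≤ ⟪c - x, v⟫ := by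
  rw [hP.eq_iff hC]
  refine and_congr_right fun _ => forall₂_congr fun c _ => ?_
  rw [sub_sub_cancel_left, inner_neg_left, real_inner_smul_left, real_inner_comm, neg_nonpos,
    mul_nonneg_iff_of_pos_left hγ]

end IsMetricProjection

end InnerProductSpace

section DelayedRecursion

variable {d : ℕ → ℝ} {Q : ℕ} {ρ : ℝ}

lemma le_sub_pow_mul_of_affine_step {B : ℝ} (hρ0 : 0 ≤ ρ) (hρ1 : ρ ≤ 1)
    {m T : ℕ} (hm : d m ≤ B) (hstep : ∀ t < T, d (m + t + 1) ≤ (1 - ρ) * B + ρ * d (m + t)) :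
    ∀ t ≤ T, d (m + t) ≤ B - ρ ^ T * (B - d m) := by
  have hpow : ∀ t ≤ T, d (m + t) ≤ B - ρ ^ t * (B - d m) := by
    intro t
    induction t with
    | zero => simp
    | succ t ih =>
      intro ht
      calc d (m + (t + 1)) ≤ (1 - ρ) * B + ρ * d (m + t) := hstep t ht
        _ ≤ (1 - ρ) * B + ρ * (B - ρ ^ t * (B - d m)) := by gcongr; exact ih (by omega)
        _ = B - ρ ^ (t + 1) * (B - d m) := by ring
  intro t ht
  calc d (m + t) ≤ B - ρ ^ t * (B - d m) := hpow t ht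
    _ ≤ B - ρ ^ T * (B - d m) := by
      have := mul_le_mul_of_nonneg_right (pow_le_pow_of_le_one hρ0 hρ1 ht) (sub_nonneg.2 hm)
      linarith

noncomputable def windowSup (d : ℕ → ℝ) (Q n : ℕ) : ℝ := ⨆ p : Fin Q, d (n + p)

lemma le_windowSup {p : ℕ} (hp : p < Q) (n : ℕ) : d (n + p) ≤ windowSup d Q n :=
  le_ciSup (f := fun p : Fin Q => d (n + p)) (Set.finite_range _).bddAbove ⟨p, hp⟩

lemma windowSup_le {n : ℕ} {c : ℝ} (hQ : 0 < Q) (h : ∀ p < Q, d (n + p) ≤ c) :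
    windowSup d Q n ≤ c :=
  haveI : Nonempty (Fin Q) := ⟨⟨0, hQ⟩⟩
  ciSup_le fun p => h p p.2

lemma antitone_windowSup (hQ : 0 < Q) (hρ0 : 0 ≤ ρ)
    (hstep : ∀ n B, (∀ p < Q, d (n + p) ≤ B) → d (n + Q) ≤ (1 - ρ) * B + ρ * d (n + Q - 1)) :
    Antitone (windowSup d Q) := by
  refine antitone_nat_of_succ_le fun n => windowSup_le hQ fun p hp => ?_
  rcases lt_or_eq_of_le (Nat.succ_le_of_lt hp) with hlt | heq
  · simpa [add_assoc, add_comm 1 p] using le_windowSup hlt n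
  · have hW := le_windowSup (d := d) (show Q - 1 < Q by omega) n
    have := hstep n _ fun p hp => le_windowSup hp n
    rw [show n + 1 + p = n + Q by omega]
    rw [show n + Q - 1 = n + (Q - 1) by omega] at this
    nlinarith [mul_le_mul_of_nonneg_left hW hρ0]

lemma eventually_sub_le_of_tendsto_windowSup (hQ : 0 < Q) (hρ0 : 0 < ρ) (hρ1 : ρ ≤ 1)
    (hstep : ∀ n B, (∀ p < Q, d (n + p) ≤ B) → d (n + Q) ≤ (1 - ρ) * B + ρ * d (n + Q - 1))
    {ℓ : ℝ} (hW : Tendsto (windowSup d Q) atTop (𝓝 ℓ)) (hℓ : ∀ n, ℓ ≤ windowSup d Q n)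
    {β : ℝ} (hβ : 0 < β) : ∀ᶠ n in atTop, ℓ - β ≤ d n := by
  set ε := ρ ^ Q * β / 2 with hε
  have hε0 : 0 < ε := by positivity
  obtain ⟨N, hN⟩ :=
    eventually_atTop.1 (hW.eventually (eventually_le_nhds (lt_add_of_pos_right ℓ hε0)))
  filter_upwards [eventually_ge_atTop (N + Q)] with m hm
  by_contra! hlow
  obtain ⟨k, rfl⟩ : ∃ k, m = k + Q := ⟨m - Q, by omega⟩
  -- Once `d` dips below `ℓ - β`, the affine steps keep the whole next window below `ℓ`.
  have hchain := le_sub_pow_mul_of_affine_step (T := Q) hρ0.le hρ1 (B := ℓ + ε)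
    (by linarith) fun t _ => by
      have := hstep (k + t + 1) (ℓ + ε) fun p hp => (le_windowSup hp _).trans (hN _ (by omega))
      rwa [show k + t + 1 + Q = k + Q + t + 1 by omega, Nat.add_sub_cancel] at this
  have hwin : windowSup d Q (k + Q + 1) ≤ ℓ + ε - ρ ^ Q * (ℓ + ε - d (k + Q)) :=
    windowSup_le hQ fun p hp => by
      simpa only [add_assoc, add_comm 1 p] using hchain (p + 1) hp
  have hgap : ρ ^ Q * β < ρ ^ Q * (ℓ + ε - d (k + Q)) :=
    mul_lt_mul_of_pos_left (by linarith) (by positivity)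
  linarith [hℓ (k + Q + 1)]

theorem exists_tendsto_of_affine_step (hd : ∀ n, 0 ≤ d n) (hQ : 0 < Q) (hρ0 : 0 < ρ) (hρ1 : ρ ≤ 1)
    (hstep : ∀ n B, (∀ p < Q, d (n + p) ≤ B) → d (n + Q) ≤ (1 - ρ) * B + ρ * d (n + Q - 1)) :
    ∃ ℓ, Tendsto d atTop (𝓝 ℓ) := by
  have hanti := antitone_windowSup hQ hρ0.le hstep
  have hbdd : BddBelow (Set.range (windowSup d Q)) :=
    ⟨0, by rintro _ ⟨n, rfl⟩; simpa using (hd n).trans (le_windowSup hQ n)⟩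
  have hW := tendsto_atTop_ciInf hanti hbdd
  refine ⟨⨅ n, windowSup d Q n, tendsto_order.2 ⟨fun a ha => ?_, fun b hb => ?_⟩⟩
  · filter_upwards [eventually_sub_le_of_tendsto_windowSup hQ hρ0 hρ1 hstep hW
      (ciInf_le hbdd) (half_pos (sub_pos.2 ha))] with n hn
    linarith
  · filter_upwards [hW.eventually (eventually_lt_nhds hb)] with n hn
    simpa using (le_windowSup hQ n).trans_lt hn

end DelayedRecursion

lemma sum_mul_le_of_le {ι : Type*} [Fintype ι] {w x : ι → ℝ} {B ρ : ℝ} (hw : ∀ i, 0 ≤ w i)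
    (hw1 : ∑ i, w i = 1) (hx : ∀ i, x i ≤ B) (i₀ : ι) (hρ : ρ ≤ w i₀) :
    ∑ i, w i * x i ≤ (1 - ρ) * B + ρ * x i₀ := by
  classical
  have hsplit : ∑ i, w i * x i = B + ∑ i, w i * (x i - B) := by
    simp only [mul_sub, sum_sub_distrib, ← sum_mul, hw1, one_mul, add_sub_cancel]
  have hrest : ∑ i ∈ univ.erase i₀, w i * (x i - B) ≤ 0 :=
    sum_nonpos fun i _ => mul_nonpos_of_nonneg_of_nonpos (hw i) (sub_nonpos.2 (hx i))
  have hmain : w i₀ * (x i₀ - B) ≤ ρ * (x i₀ - B) :=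
    mul_le_mul_of_nonpos_right hρ (sub_nonpos.2 (hx i₀))
  rw [hsplit, ← add_sum_erase _ _ (mem_univ i₀)]
  linarith

theorem exists_tendsto_of_le_delayed_average {ι : Type*} [Fintype ι] {w : ι → ℝ}
    (hw : ∀ i, 0 < w i) (hw1 : ∑ i, w i = 1) {d s : ℕ → ℝ} (hd : ∀ n, 0 ≤ d n)
    (hs : ∀ n, 0 ≤ s n) {Q : ℕ} {a : ℕ → ι → ℕ} (ha : ∀ n ≥ Q, ∀ i, n - Q ≤ a n i ∧ a n i < n)
    (hlast : ∀ n ≥ Q, ∃ i, a n i = n - 1)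
    (hrec : ∀ n ≥ Q, d n + s n ≤ ∑ i, w i * d (a n i)) :
    ∃ ℓ, Tendsto d atTop (𝓝 ℓ) ∧ Tendsto s atTop (𝓝 0) := by
  obtain ⟨i₀, -⟩ := hlast Q le_rfl
  have hQ : 0 < Q := by have := ha Q le_rfl i₀; omega
  set ρ := univ.inf' ⟨i₀, mem_univ _⟩ w
  have hρw : ∀ i, ρ ≤ w i := fun i => inf'_le _ (mem_univ i)
  have hρ0 : 0 < ρ := (lt_inf'_iff _).2 fun i _ => hw i
  have hρ1 : ρ ≤ 1 :=
    (hρw i₀).trans (hw1 ▸ single_le_sum (fun i _ => (hw i).le) (mem_univ i₀))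
  have hstep : ∀ n B, (∀ p < Q, d (n + p) ≤ B) →
      d (n + Q) ≤ (1 - ρ) * B + ρ * d (n + Q - 1) := by
    intro n B hB
    obtain ⟨i, hi⟩ := hlast (n + Q) le_add_self
    have hwin : ∀ i, d (a (n + Q) i) ≤ B := fun i => by
      obtain ⟨h₁, h₂⟩ := ha (n + Q) le_add_self i
      simpa [show n + (a (n + Q) i - n) = a (n + Q) i by omega] using
        hB (a (n + Q) i - n) (by omega)
    calc d (n + Q) ≤ d (n + Q) + s (n + Q) := le_add_of_nonneg_right (hs _)
      _ ≤ ∑ i, w i * d (a (n + Q) i) := hrec _ le_add_self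
      _ ≤ _ := hi ▸ sum_mul_le_of_le (fun i => (hw i).le) hw1 hwin i (hρw i)
  obtain ⟨ℓ, hℓ⟩ := exists_tendsto_of_affine_step hd hQ hρ0 hρ1 hstep
  refine ⟨ℓ, hℓ, ?_⟩
  have hdelay : ∀ i, Tendsto (fun n => a n i) atTop atTop := fun i =>
    tendsto_atTop_mono' _ (eventually_atTop.2 ⟨Q, fun n hn => (ha n hn i).1⟩)
      (tendsto_sub_atTop_nat Q)
  have havg : Tendsto (fun n => ∑ i, w i * d (a n i) - d n) atTop (𝓝 0) := by
    simpa [← sum_mul, hw1] using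
      (tendsto_finsetSum univ fun i _ => (hℓ.comp (hdelay i)).const_mul (w i)).sub hℓ
  refine squeeze_zero' (Eventually.of_forall hs) ?_ havg
  filter_upwards [eventually_ge_atTop Q] with n hn
  linarith [hrec n hn]

section Bookkeeping

variable {ι : Type*} [DecidableEq ι]

def lastVisit (j : ℕ → ι) (i : ι) : ℕ → ℕ
  | 0 => 0
  | n + 1 => if j n = i then n else lastVisit j i n

variable {j : ℕ → ι} {i : ι}

lemma lastVisit_succ_self (n : ℕ) : lastVisit j (j n) (n + 1) = n := by
  simp [lastVisit]

lemma lastVisit_succ_of_ne {n : ℕ} (h : j n ≠ i) : lastVisit j i (n + 1) = lastVisit j i n := by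
  simp [lastVisit, h]

lemma lastVisit_lt {n : ℕ} (hn : 0 < n) : lastVisit j i n < n := by
  induction n with
  | zero => omega
  | succ n ih =>
    by_cases h : j n = i
    · simp [lastVisit, h]
    · rw [lastVisit_succ_of_ne h]
      rcases Nat.eq_zero_or_pos n with rfl | hn
      · simp [lastVisit]
      · exact (ih hn).trans (Nat.lt_succ_self n)

lemma le_lastVisit {m n : ℕ} (hmn : m < n) (hm : j m = i) : m ≤ lastVisit j i n := by
  induction n with
  | zero => omega
  | succ n ih =>
    by_cases h : j n = i
    · simp only [lastVisit, h, if_true]; omega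
    · rw [lastVisit_succ_of_ne h]
      exact ih (lt_of_le_of_ne (Nat.lt_succ_iff.1 hmn) fun hmn => h (hmn ▸ hm))

lemma eq_apply_lastVisit {X : Type*} {b : ℕ → ι → X} {f : ι → ℕ → X}
    (hupd : ∀ n, b (n + 1) (j n) = f (j n) n) (hkeep : ∀ n i, i ≠ j n → b (n + 1) i = b n i) :
    ∀ n i, (∃ m < n, j m = i) → b n i = f i (lastVisit j i n) := by
  intro n
  induction n with
  | zero => simp
  | succ n ih =>
    rintro i ⟨m, hmn, hm⟩
    by_cases h : j n = i
    · subst h; rw [hupd, lastVisit_succ_self]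
    · rw [hkeep n i (Ne.symm h), lastVisit_succ_of_ne h]
      exact ih i ⟨m, lt_of_le_of_ne (Nat.lt_succ_iff.1 hmn) fun hmn => h (hmn ▸ hm), hm⟩

lemma eq_sum_of_update [Fintype ι] {X : Type*} [AddCommGroup X] {b : ℕ → ι → X} {t : ℕ → X}
    (h₀ : t 0 = ∑ i, b 0 i) (hkeep : ∀ n i, i ≠ j n → b (n + 1) i = b n i)
    (ht : ∀ n, t (n + 1) = t n + b (n + 1) (j n) - b n (j n)) : ∀ n, t n = ∑ i, b n i := by
  intro n
  induction n with
  | zero => exact h₀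
  | succ n ih =>
    rw [ht, ih, ← add_sum_erase _ _ (mem_univ (j n)),
      ← add_sum_erase _ (b (n + 1)) (mem_univ (j n)),
      sum_congr rfl fun i hi => hkeep n i (ne_of_mem_erase hi)]
    abel

lemma exists_visit_of_sweep [Fintype ι] {Q : ℕ}
    (hQ : ∀ n, (range Q).image (fun p => j (n + p)) = univ) {n : ℕ} (hn : Q ≤ n) (i : ι) :
    ∃ m, n - Q ≤ m ∧ m < n ∧ j m = i := by
  obtain ⟨p, hp, rfl⟩ := mem_image.1 (hQ (n - Q) ▸ mem_univ i)
  exact ⟨n - Q + p, by omega, by rw [mem_range] at hp; omega, rfl⟩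

lemma exists_block_lastVisit_mem_window [Fintype ι] {κ : Type*} [Fintype κ] [DecidableEq κ]
    {𝕂 : ι → Finset κ} (hne : ∀ i, (𝕂 i).Nonempty)
    (hdisj : ∀ i₁ i₂, i₁ ≠ i₂ → Disjoint (𝕂 i₁) (𝕂 i₂)) (hcover : univ.biUnion 𝕂 = univ)
    {Q : ℕ} (hQ : ∀ n, (range Q).image (fun p => j (n + p)) = univ) :
    ∃ blk : κ → ι, (∀ i, ∀ k ∈ 𝕂 i, blk k = i) ∧
      (∀ n ≥ Q, ∀ k, n - Q ≤ lastVisit j (blk k) n ∧ lastVisit j (blk k) n < n) ∧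
      ∀ n ≥ Q, ∃ k, lastVisit j (blk k) n = n - 1 := by
  choose blk hblk using fun k => mem_biUnion.1 (hcover ▸ mem_univ k)
  have hblk_eq : ∀ i, ∀ k ∈ 𝕂 i, blk k = i := fun i k hk => by_contra fun hne =>
    disjoint_left.1 (hdisj _ _ hne) (hblk k).2 hk
  have hwin : ∀ n ≥ Q, ∀ k, n - Q ≤ lastVisit j (blk k) n ∧ lastVisit j (blk k) n < n :=
    fun n hn k => by
      obtain ⟨m, hm₁, hm₂, hm⟩ := exists_visit_of_sweep hQ hn (blk k)
      exact ⟨hm₁.trans (le_lastVisit hm₂ hm), lastVisit_lt (by omega)⟩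
  refine ⟨blk, hblk_eq, hwin, fun n hn => ?_⟩
  obtain ⟨k, hk⟩ := hne (j (n - 1))
  refine ⟨k, ?_⟩
  obtain ⟨n, rfl⟩ : ∃ n', n = n' + 1 := ⟨n - 1, by have := (hwin n hn k).2; omega⟩
  rw [Nat.add_sub_cancel] at hk ⊢
  rw [hblk_eq _ k hk, lastVisit_succ_self]

lemma sum_eq_sum_lastVisit [Fintype ι] {κ X : Type*} [Fintype κ] [DecidableEq κ]
    [AddCommMonoid X] {𝕂 : ι → Finset κ} (hdisj : ∀ i₁ i₂, i₁ ≠ i₂ → Disjoint (𝕂 i₁) (𝕂 i₂))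
    (hcover : univ.biUnion 𝕂 = univ) {blk : κ → ι} (hblk : ∀ i, ∀ k ∈ 𝕂 i, blk k = i)
    {b : ℕ → ι → X} {g : κ → ℕ → X} (hupd : ∀ n, b (n + 1) (j n) = ∑ k ∈ 𝕂 (j n), g k n)
    (hkeep : ∀ n i, i ≠ j n → b (n + 1) i = b n i) {n : ℕ} (hn : ∀ i, ∃ m < n, j m = i) :
    ∑ i, b n i = ∑ k, g k (lastVisit j (blk k) n) := by
  rw [← hcover, sum_biUnion fun i₁ _ i₂ _ h => hdisj i₁ i₂ h]
  refine sum_congr rfl fun i _ => ?_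
  rw [eq_apply_lastVisit (f := fun i m => ∑ k ∈ 𝕂 i, g k m) hupd hkeep n i (hn i)]
  exact sum_congr rfl fun k hk => by rw [hblk i k hk]

end Bookkeeping

lemma sum_smul_sub_smul {ι V : Type*} [Fintype ι] [AddCommGroup V] [Module ℝ V] {w : ι → ℝ}
    (hw1 : ∑ k, w k = 1) (x : V) (γ : ℝ) (v : ι → V) :
    ∑ k, w k • (x - γ • v k) = x - γ • ∑ k, w k • v k := by
  simp only [smul_sub, sum_sub_distrib, ← sum_smul, hw1, one_smul, smul_sum, smul_comm γ]

section DelayedForwardBackward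

variable {E ι : Type*} [NormedAddCommGroup E] [InnerProductSpace ℝ E] [Fintype ι]
  {C : Set E} {P : E → E} {w : ι → ℝ} {G : ι → E → E} {γ M : ℝ}
  {Q : ℕ} {a : ℕ → ι → ℕ} {θ z : ℕ → E}

lemma norm_sub_fixedPoint_sq_add_le (hP : IsMetricProjection C P) (hC : Convex ℝ C)
    (hw : ∀ k, 0 ≤ w k) (hw1 : ∑ k, w k = 1)
    (hG : ∀ k x x', ‖G k x - G k x'‖ ^ 2 ≤ M * ⟪x - x', G k x - G k x'⟫) (hM : 0 < M)
    (hγ : 0 ≤ γ) {x : ι → E} {z p θ' z' : E} (hz : z = ∑ k, w k • (x k - γ • G k (x k)))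
    (hp : p = P z) (hz' : z' = ∑ k, w k • (θ' - γ • G k θ')) (hθ' : P z' = θ') :
    ‖p - θ'‖ ^ 2 + (‖(z - p) - (z' - θ')‖ ^ 2 + ∑ k, w k *
        (‖(x k - γ • G k (x k)) - (θ' - γ • G k θ') - (z - z')‖ ^ 2 +
          γ * (2 / M - γ) * ‖G k (x k) - G k θ'‖ ^ 2)) ≤
      ∑ k, w k * ‖x k - θ'‖ ^ 2 := by
  set v : ι → E := fun k => (x k - γ • G k (x k)) - (θ' - γ • G k θ')
  have hproj := (hP.firmlyNonexpansive hC).norm_sub_sq_add_le z z'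
  rw [← hp, hθ'] at hproj
  have hmean : z - z' = ∑ k, w k • v k := by
    simp only [hz, hz', v, smul_sub, sum_sub_distrib]
  have hvar := norm_sum_smul_sq_add_sum_mul_norm_sub_sq univ hw1 v
  rw [← hmean] at hvar
  have hstep : ∀ k, w k * (‖v k‖ ^ 2 + γ * (2 / M - γ) * ‖G k (x k) - G k θ'‖ ^ 2) ≤
      w k * ‖x k - θ'‖ ^ 2 := fun k => by
    have := norm_sub_smul_sq_add_le hM hγ (hG k (x k) θ')
    rw [show x k - θ' - γ • (G k (x k) - G k θ') = v k by simp only [v, smul_sub]; abel] at this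
    exact mul_le_mul_of_nonneg_left this (hw k)
  have hsum := sum_le_sum fun k (_ : k ∈ univ) => hstep k
  simp only [mul_add, sum_add_distrib] at hsum ⊢
  linarith

lemma exists_tendsto_norm_sub_sq_and_tendsto_delayed_sub (hP : IsMetricProjection C P)
    (hC : Convex ℝ C)    (hw : ∀ k, 0 < w k) (hw1 : ∑ k, w k = 1)
    (hG : ∀ k x x', ‖G k x - G k x'‖ ^ 2 ≤ M * ⟪x - x', G k x - G k x'⟫)
    (hγ0 : 0 < γ) (hγ : γ < 2 / M)
    (ha : ∀ n ≥ Q, ∀ k, n - Q ≤ a n k ∧ a n k < n) (hlast : ∀ n ≥ Q, ∃ k, a n k = n - 1)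
    (hθ : ∀ n, θ (n + 1) = P (z (n + 1)))
    (hz : ∀ n ≥ Q, z n = ∑ k, w k • (θ (a n k) - γ • G k (θ (a n k))))
    {θ' : E} (hθ' : P (∑ k, w k • (θ' - γ • G k θ')) = θ') :
    (∃ ℓ, Tendsto (fun n => ‖θ n - θ'‖ ^ 2) atTop (𝓝 ℓ)) ∧
      ∀ k, Tendsto (fun n => θ (a n k) - θ n) atTop (𝓝 0) := by
  have hM : 0 < M := (div_pos_iff_of_pos_left two_pos).1 (hγ0.trans hγ)
  have hδ : 0 < γ * (2 / M - γ) := mul_pos hγ0 (sub_pos.2 hγ)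
  set z' := ∑ k, w k • (θ' - γ • G k θ')
  set e : ℕ → ι → ℝ := fun n k => w k *
    (‖(θ (a n k) - γ • G k (θ (a n k))) - (θ' - γ • G k θ') - (z n - z')‖ ^ 2 +
      γ * (2 / M - γ) * ‖G k (θ (a n k)) - G k θ'‖ ^ 2) with he
  set s : ℕ → ℝ := fun n => ‖(z n - θ n) - (z' - θ')‖ ^ 2 + ∑ k, e n k
  have he0 : ∀ n k, 0 ≤ e n k := fun n k =>
    mul_nonneg (hw k).le (add_nonneg (sq_nonneg _) (mul_nonneg hδ.le (sq_nonneg _)))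
  have hrec : ∀ n ≥ Q, ‖θ n - θ'‖ ^ 2 + s n ≤ ∑ k, w k * ‖θ (a n k) - θ'‖ ^ 2 := by
    intro n hn
    obtain ⟨k, -⟩ := hlast n hn
    obtain ⟨m, rfl⟩ : ∃ m, n = m + 1 := ⟨n - 1, by have := ha n hn k; omega⟩
    exact norm_sub_fixedPoint_sq_add_le hP hC (fun k => (hw k).le) hw1 hG hM hγ0.le (hz _ hn)
      (hθ m) rfl hθ'
  obtain ⟨ℓ, hd, hs⟩ := exists_tendsto_of_le_delayed_average hw hw1 (fun n => sq_nonneg _)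
    (fun n => add_nonneg (sq_nonneg _) (sum_nonneg fun k _ => he0 n k)) ha hlast hrec
  refine ⟨⟨ℓ, hd⟩, fun k => ?_⟩
  have hek : ∀ n, e n k ≤ s n := fun n =>
    (single_le_sum (fun k _ => he0 n k) (mem_univ k)).trans (le_add_of_nonneg_left (sq_nonneg _))
  have hres : Tendsto (fun n => z n - θ n) atTop (𝓝 (z' - θ')) :=
    tendsto_of_mul_norm_sub_sq_le one_pos hs fun n => by
      simpa [s] using sum_nonneg fun k (_ : k ∈ univ) => he0 n k
  have hfwd : Tendsto (fun n => (θ (a n k) - γ • G k (θ (a n k))) - z n) atTop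
      (𝓝 ((θ' - γ • G k θ') - z')) :=
    tendsto_of_mul_norm_sub_sq_le (hw k) hs fun n => by
      refine le_trans ?_ (hek n)
      rw [he, sub_sub_sub_comm]
      exact mul_le_mul_of_nonneg_left (le_add_of_nonneg_right (by positivity)) (hw k).le
  have hgrad : Tendsto (fun n => G k (θ (a n k))) atTop (𝓝 (G k θ')) :=
    tendsto_of_mul_norm_sub_sq_le (mul_pos (hw k) hδ) hs fun n => by
      refine le_trans ?_ (hek n)
      rw [he, mul_assoc]
      exact mul_le_mul_of_nonneg_left (le_add_of_nonneg_left (sq_nonneg _)) (hw k).le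
  convert (hfwd.add (hgrad.const_smul γ)).add hres using 2 <;> abel

lemma proj_eq_of_tendsto_subseq (hP : IsMetricProjection C P) (hC : Convex ℝ C)
    (hG : ∀ k x x', ‖G k x - G k x'‖ ^ 2 ≤ M * ⟪x - x', G k x - G k x'⟫) (hM : 0 ≤ M)
    (hθ : ∀ n, θ (n + 1) = P (z (n + 1)))
    (hz : ∀ n ≥ Q, z n = ∑ k, w k • (θ (a n k) - γ • G k (θ (a n k))))
    (hclose : ∀ k, Tendsto (fun n => θ (a n k) - θ n) atTop (𝓝 0)) {φ : ℕ → ℕ}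
    (hφ : StrictMono φ) {y : E} (hθφ : Tendsto (θ ∘ φ) atTop (𝓝 y)) :
    P (∑ k, w k • (y - γ • G k y)) = y := by
  have hGc : ∀ k, Continuous (G k) := fun k =>
    (lipschitzWith_of_norm_sub_sq_le_mul_inner (M := M.toNNReal) fun x x' => by
      simpa [Real.coe_toNNReal _ hM] using hG k x x').continuous
  have hdelayed : ∀ k, Tendsto (fun i => θ (a (φ i) k)) atTop (𝓝 y) := fun k => by
    simpa using ((hclose k).comp hφ.tendsto_atTop).add hθφ
  have hzφ : Tendsto (z ∘ φ) atTop (𝓝 (∑ k, w k • (y - γ • G k y))) := by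
    refine (tendsto_finsetSum univ fun k _ => ((hdelayed k).sub
      ((((hGc k).tendsto y).comp (hdelayed k)).const_smul γ)).const_smul (w k)).congr' ?_
    filter_upwards [hφ.tendsto_atTop.eventually (eventually_ge_atTop Q)] with i hi
    exact (hz _ hi).symm
  refine tendsto_nhds_unique
    ((((hP.firmlyNonexpansive hC).continuous.tendsto _).comp hzφ).congr' ?_) hθφ
  filter_upwards [hφ.tendsto_atTop.eventually (eventually_ge_atTop 1)] with i hi
  obtain ⟨m, hm⟩ : ∃ m, φ i = m + 1 := ⟨φ i - 1, by omega⟩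
  simp only [Function.comp_apply, hm, hθ]

theorem exists_tendsto_fixedPoint_of_delayed_iteration [FiniteDimensional ℝ E]
    (hP : IsMetricProjection C P) (hC : Convex ℝ C)
    (hw : ∀ k, 0 < w k) (hw1 : ∑ k, w k = 1)
    (hG : ∀ k x x', ‖G k x - G k x'‖ ^ 2 ≤ M * ⟪x - x', G k x - G k x'⟫)
    (hγ0 : 0 < γ) (hγ : γ < 2 / M)
    (ha : ∀ n ≥ Q, ∀ k, n - Q ≤ a n k ∧ a n k < n) (hlast : ∀ n ≥ Q, ∃ k, a n k = n - 1)
    (hθ : ∀ n, θ (n + 1) = P (z (n + 1)))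
    (hz : ∀ n ≥ Q, z n = ∑ k, w k • (θ (a n k) - γ • G k (θ (a n k))))
    (hfix : ∃ θ', P (∑ k, w k • (θ' - γ • G k θ')) = θ') :
    ∃ θ', P (∑ k, w k • (θ' - γ • G k θ')) = θ' ∧ Tendsto θ atTop (𝓝 θ') := by
  have hM : 0 < M := (div_pos_iff_of_pos_left two_pos).1 (hγ0.trans hγ)
  obtain ⟨θ', hθ'⟩ := hfix
  obtain ⟨⟨ℓ, hd⟩, hclose⟩ :=
    exists_tendsto_norm_sub_sq_and_tendsto_delayed_sub hP hC hw hw1 hG hγ0 hγ ha hlast hθ hz hθ'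
  obtain ⟨r, hr⟩ := (Metric.isBounded_range_of_tendsto _ hd).bddAbove
  obtain ⟨y, -, φ, hφ, hθφ⟩ := tendsto_subseq_of_bounded (Metric.isBounded_closedBall (x := θ'))
    fun n => by simpa [dist_eq_norm] using Real.abs_le_sqrt (hr ⟨n, rfl⟩)
  have hy := proj_eq_of_tendsto_subseq hP hC hG hM.le hθ hz hclose hφ hθφ
  obtain ⟨⟨ℓ', hd'⟩, -⟩ :=
    exists_tendsto_norm_sub_sq_and_tendsto_delayed_sub hP hC hw hw1 hG hγ0 hγ ha hlast hθ hz hy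
  exact ⟨y, hy, tendsto_of_tendsto_norm_sub_sq_of_subseq hd' hφ hθφ⟩

end DelayedForwardBackward

theorem batch_forward_backward_converges_general
    {Θ G : Type*} [NormedAddCommGroup Θ] [InnerProductSpace ℝ Θ] [FiniteDimensional ℝ Θ]
    [NormedAddCommGroup G] [InnerProductSpace ℝ G] [FiniteDimensional ℝ G]
    (K : ℕ) (hK : 0 < K)
    {C : Set Θ} (hCcv : Convex ℝ C)
    (L : Fin K → Θ →L[ℝ] G) (y : Fin K → G)
    (ω : Fin K → ℝ) (hω : ∀ k, ω k ∈ Set.Ioc (0 : ℝ) 1) (hωsum : ∑ k, ω k = 1)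
    (R : G → G) (hR : ∀ z₁ z₂ : G, ‖R z₁ - R z₂‖ ^ 2 ≤ ⟪z₁ - z₂, R z₁ - R z₂⟫)
    (hsol : ∃ θ ∈ C, ∀ ϑ ∈ C,
      0 ≤ ⟪ϑ - θ, ∑ k, ω k • ContinuousLinearMap.adjoint (L k) (R (L k θ) - y k)⟫)
    -- (𝕂_j)_{1 ≤ j ≤ J} is a partition of {1,…,K} into nonempty sets
    (J : ℕ)
    (𝕂 : Fin J → Finset (Fin K)) (h𝕂ne : ∀ j, (𝕂 j).Nonempty)
    (h𝕂disj : ∀ j₁ j₂ : Fin J, j₁ ≠ j₂ → Disjoint (𝕂 j₁) (𝕂 j₂))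
    (h𝕂cover : (Finset.univ : Finset (Fin J)).biUnion 𝕂 = (Finset.univ : Finset (Fin K)))
    (γ : ℝ) (hγ0 : 0 < γ)
    (hγ : γ < 2 / Finset.univ.sup' (Finset.univ_nonempty_iff.mpr ⟨⟨0, hK⟩⟩)
      (fun k => ‖L k‖ ^ 2))
    -- P is the metric projection onto C
    (P : Θ → Θ) (hP : ∀ x : Θ, P x ∈ C ∧ ∀ c ∈ C, ‖x - P x‖ ≤ ‖x - c‖)
    -- batch index selected at each iteration
    (j : ℕ → Fin J)
    -- the iterates of Algorithm 2
    (θ : ℕ → Θ) (θbar : ℕ → Fin J → Θ) (θtot : ℕ → Θ)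
    (hinit : θtot 0 = ∑ i, θbar 0 i)
    (hupd : ∀ n : ℕ, θbar (n + 1) (j n) = ∑ k ∈ 𝕂 (j n),
      ω k • (θ n - γ • ContinuousLinearMap.adjoint (L k) (R (L k (θ n)) - y k)))
    (hkeep : ∀ n : ℕ, ∀ i : Fin J, i ≠ j n → θbar (n + 1) i = θbar n i)
    (htot : ∀ n : ℕ, θtot (n + 1) = θtot n + θbar (n + 1) (j n) - θbar n (j n))
    (hproj : ∀ n : ℕ, θ (n + 1) = P (θtot (n + 1)))
    -- every batch index is selected at least once within any P consecutive iterations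
    (hsweep : ∃ Q : ℕ, ∀ n : ℕ,
      (Finset.range Q).image (fun p => j (n + p)) = (Finset.univ : Finset (Fin J))) :
    ∃ θstar : Θ,
      (θstar ∈ C ∧ ∀ ϑ ∈ C,
        0 ≤ ⟪ϑ - θstar,
              ∑ k, ω k • ContinuousLinearMap.adjoint (L k) (R (L k θstar) - y k)⟫) ∧
      Tendsto θ atTop (nhds θstar) := by
  obtain ⟨Q, hQ⟩ := hsweep
  obtain ⟨blk, hblk, ha, hlast⟩ := exists_block_lastVisit_mem_window h𝕂ne h𝕂disj h𝕂cover hQ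
  set F : Fin K → Θ → Θ := fun k x => ContinuousLinearMap.adjoint (L k) (R (L k x) - y k)
  set M := univ.sup' (univ_nonempty_iff.mpr ⟨⟨0, hK⟩⟩) fun k => ‖L k‖ ^ 2
  have hF : ∀ k x x', ‖F k x - F k x'‖ ^ 2 ≤ M * ⟪x - x', F k x - F k x'⟫ := fun k =>
    norm_adjoint_sub_sq_le_mul_inner (L k) hR (y k) (le_sup' (fun k => ‖L k‖ ^ 2) (mem_univ k))
  have hz : ∀ n ≥ Q, θtot n = ∑ k, ω k • (θ (lastVisit j (blk k) n) -
      γ • F k (θ (lastVisit j (blk k) n))) := fun n hn =>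
    (eq_sum_of_update hinit hkeep htot n).trans <| sum_eq_sum_lastVisit h𝕂disj h𝕂cover hblk
      (g := fun k m => ω k • (θ m - γ • F k (θ m))) hupd hkeep fun i => by
        obtain ⟨m, -, hmn, hm⟩ := exists_visit_of_sweep hQ hn i
        exact ⟨m, hmn, hm⟩
  have hfix : ∀ x, P (∑ k, ω k • (x - γ • F k x)) = x ↔
      x ∈ C ∧ ∀ ϑ ∈ C, 0 ≤ ⟪ϑ - x, ∑ k, ω k • F k x⟫ := fun x => by
    rw [sum_smul_sub_smul hωsum, IsMetricProjection.sub_smul_eq_self_iff hP hCcv hγ0]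
  obtain ⟨θs, hθs⟩ := hsol
  obtain ⟨θ', hθ', hlim⟩ := exists_tendsto_fixedPoint_of_delayed_iteration hP hCcv
    (fun k => (hω k).1) hωsum hF hγ0 hγ ha hlast hproj hz ⟨θs, (hfix θs).2 hθs⟩
  exact ⟨θ', (hfix θ').1 hθ', hlim⟩

/-- convergence of the batch forward-backward algorithm (Algorithm 2)
to a solution of the variational inequality. -/
theorem batch_forward_backward_converges
    {Θ G : Type*} [NormedAddCommGroup Θ] [InnerProductSpace ℝ Θ] [FiniteDimensional ℝ Θ]
    [NormedAddCommGroup G] [InnerProductSpace ℝ G] [FiniteDimensional ℝ G]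
    (K : ℕ) (hK : 0 < K)
    {C : Set Θ} (hCne : C.Nonempty) (hCcl : IsClosed C) (hCcv : Convex ℝ C)
    (L : Fin K → Θ →L[ℝ] G) (hL : ∃ k, L k ≠ 0) (y : Fin K → G)
    (ω : Fin K → ℝ) (hω : ∀ k, ω k ∈ Set.Ioc (0 : ℝ) 1) (hωsum : ∑ k, ω k = 1)
    (R : G → G) (hR : ∀ z₁ z₂ : G, ‖R z₁ - R z₂‖ ^ 2 ≤ ⟪z₁ - z₂, R z₁ - R z₂⟫)
    (hsol : ∃ θ ∈ C, ∀ ϑ ∈ C,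
      0 ≤ ⟪ϑ - θ, ∑ k, ω k • ContinuousLinearMap.adjoint (L k) (R (L k θ) - y k)⟫)
    -- (𝕂_j)_{1 ≤ j ≤ J} is a partition of {1,…,K} into nonempty sets
    (J : ℕ) (hJ : 0 < J)
    (𝕂 : Fin J → Finset (Fin K)) (h𝕂ne : ∀ j, (𝕂 j).Nonempty)
    (h𝕂disj : ∀ j₁ j₂ : Fin J, j₁ ≠ j₂ → Disjoint (𝕂 j₁) (𝕂 j₂))
    (h𝕂cover : (Finset.univ : Finset (Fin J)).biUnion 𝕂 = (Finset.univ : Finset (Fin K)))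
    (γ : ℝ) (hγ0 : 0 < γ)
    (hγ : γ < 2 / Finset.univ.sup' (Finset.univ_nonempty_iff.mpr ⟨⟨0, hK⟩⟩)
      (fun k => ‖L k‖ ^ 2))
    -- P is the metric projection onto C
    (P : Θ → Θ) (hP : ∀ x : Θ, P x ∈ C ∧ ∀ c ∈ C, ‖x - P x‖ ≤ ‖x - c‖)
    -- batch index selected at each iteration
    (j : ℕ → Fin J)
    -- the iterates of Algorithm 2
    (θ : ℕ → Θ) (θbar : ℕ → Fin J → Θ) (θtot : ℕ → Θ)
    (hinit : θtot 0 = ∑ i, θbar 0 i)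
    (hupd : ∀ n : ℕ, θbar (n + 1) (j n) = ∑ k ∈ 𝕂 (j n),
      ω k • (θ n - γ • ContinuousLinearMap.adjoint (L k) (R (L k (θ n)) - y k)))
    (hkeep : ∀ n : ℕ, ∀ i : Fin J, i ≠ j n → θbar (n + 1) i = θbar n i)
    (htot : ∀ n : ℕ, θtot (n + 1) = θtot n + θbar (n + 1) (j n) - θbar n (j n))
    (hproj : ∀ n : ℕ, θ (n + 1) = P (θtot (n + 1)))
    -- every batch index is selected at least once within any P consecutive iterations
    (hsweep : ∃ Q : ℕ, ∀ n : ℕ,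
      (Finset.range Q).image (fun p => j (n + p)) = (Finset.univ : Finset (Fin J))) :
    ∃ θstar : Θ,
      (θstar ∈ C ∧ ∀ ϑ ∈ C,
        0 ≤ ⟪ϑ - θstar,
              ∑ k, ω k • ContinuousLinearMap.adjoint (L k) (R (L k θstar) - y k)⟫) ∧
      Tendsto θ atTop (nhds θstar) :=
  batch_forward_backward_converges_general K hK hCcv L y ω hω hωsum R hR hsol J 𝕂 h𝕂ne h𝕂disj
    h𝕂cover γ hγ0 hγ P hP j θ θbar θtot hinit hupd hkeep htot hproj hsweep
end

section
/- Let Θ and G be finite-dimensional real inner product spaces, let K be a positive integer, let C ⊆ Θ be a nonempty closed convex set, let L_1,…,L_K : Θ → G be continuous linear maps, let y_1,…,y_K ∈ G, let ω_1,…,ω_K ∈ (0,1] with ω_1+⋯+ω_K = 1, and let R : G → G be firmly nonexpansive. Suppose there exists θ* ∈ C such that R(L_k θ*) = y_k for every k ∈ {1,…,K}. Then a point θ ∈ C satisfies the variational inequality — for all ϑ ∈ C, ⟨ϑ − θ, Σ_{k=1}^K ω_k L_k*(R(L_k θ) − y_k)⟩ ≥ 0 — if and only if R(L_k θ) = y_k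 for every k ∈ {1,…,K}. -/
/-!
Testing the variational inequality at the exact solution θ* and passing each `L k` to the
other side via its adjoint, firm nonexpansiveness of `R` at the pair `(L k θ, L k θ*)`
bounds the pairing by `-∑ k, ω k * ‖R (L k θ) - y k‖ ^ 2`. The inequality thus forces every
residual to vanish since the weights are positive; conversely, vanishing residuals make the
operator in the inequality zero.
-/

open scoped RealInnerProductSpace

theorem eq_zero_of_sum_mul_norm_sq_nonpos {E ι : Type*} [NormedAddCommGroup E] {s : Finset ι}
    {ω : ι → ℝ} {v : ι → E} (hω : ∀ k ∈ s, 0 < ω k) (h : ∑ k ∈ s, ω k * ‖v k‖ ^ 2 ≤ 0) :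
    ∀ k ∈ s, v k = 0 := by
  have hnonneg : ∀ k ∈ s, 0 ≤ ω k * ‖v k‖ ^ 2 := fun k hk => by
    have := hω k hk
    positivity
  intro k hk
  have hk0 := (Finset.sum_eq_zero_iff_of_nonneg hnonneg).1
    (le_antisymm h (Finset.sum_nonneg hnonneg)) k hk
  simpa [(hω k hk).ne'] using hk0

section

variable {G : Type*} [NormedAddCommGroup G] [InnerProductSpace ℝ G]

def IsFirmlyNonexpansive (R : G → G) : Prop :=
  ∀ z₁ z₂ : G, ‖R z₁ - R z₂‖ ^ 2 ≤ ⟪z₁ - z₂, R z₁ - R z₂⟫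

theorem IsFirmlyNonexpansive.inner_sub_le_neg_norm_sq {R : G → G} (hR : IsFirmlyNonexpansive R)
    {z₀ y : G} (hz₀ : R z₀ = y) (z : G) :
    ⟪z₀ - z, R z - y⟫ ≤ -‖R z - y‖ ^ 2 := by
  have h := hR z z₀
  rw [hz₀] at h
  rw [← neg_sub z z₀, inner_neg_left]
  linarith

end

section

variable {Θ G : Type*} [NormedAddCommGroup Θ] [InnerProductSpace ℝ Θ] [CompleteSpace Θ]
  [NormedAddCommGroup G] [InnerProductSpace ℝ G] [CompleteSpace G]
  {ι : Type*} (s : Finset ι) (L : ι → Θ →L[ℝ] G) (ω : ι → ℝ)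

theorem inner_sum_smul_adjoint (x : Θ) (r : ι → G) :
    ⟪x, ∑ k ∈ s, ω k • ContinuousLinearMap.adjoint (L k) (r k)⟫ =
      ∑ k ∈ s, ω k * ⟪L k x, r k⟫ := by
  simp only [inner_sum, real_inner_smul_right, ContinuousLinearMap.adjoint_inner_right]

variable {s L ω}

theorem IsFirmlyNonexpansive.inner_sum_smul_adjoint_le {R : G → G} (hR : IsFirmlyNonexpansive R)
    {y : ι → G} (hω : ∀ k ∈ s, 0 ≤ ω k) {θstar : Θ} (hexact : ∀ k ∈ s, R (L k θstar) = y k)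
    (θ : Θ) :
    ⟪θstar - θ, ∑ k ∈ s, ω k • ContinuousLinearMap.adjoint (L k) (R (L k θ) - y k)⟫ ≤
      -∑ k ∈ s, ω k * ‖R (L k θ) - y k‖ ^ 2 := by
  rw [inner_sum_smul_adjoint, ← Finset.sum_neg_distrib]
  refine Finset.sum_le_sum fun k hk => ?_
  rw [← mul_neg, map_sub]
  exact mul_le_mul_of_nonneg_left (hR.inner_sub_le_neg_norm_sq (hexact k hk) _) (hω k hk)

end

theorem vi_exact_relaxation_general
    {Θ G : Type*} [NormedAddCommGroup Θ] [InnerProductSpace ℝ Θ] [FiniteDimensional ℝ Θ]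
    [NormedAddCommGroup G] [InnerProductSpace ℝ G] [FiniteDimensional ℝ G]
    (K : ℕ)
    {C : Set Θ}
    (L : Fin K → Θ →L[ℝ] G) (y : Fin K → G)
    (ω : Fin K → ℝ) (hω : ∀ k, ω k ∈ Set.Ioc (0 : ℝ) 1)
    (R : G → G) (hR : ∀ z₁ z₂ : G, ‖R z₁ - R z₂‖ ^ 2 ≤ ⟪z₁ - z₂, R z₁ - R z₂⟫)
    (θstar : Θ) (hθstar : θstar ∈ C ∧ ∀ k, R (L k θstar) = y k)
    (θ : Θ) :
    (∀ ϑ ∈ C, 0 ≤ ⟪ϑ - θ, ∑ k, ω k • ContinuousLinearMap.adjoint (L k) (R (L k θ) - y k)⟫) ↔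
      ∀ k, R (L k θ) = y k := by
  obtain ⟨hθstarC, hexact⟩ := hθstar
  have hR : IsFirmlyNonexpansive R := hR
  constructor
  · intro hvi k
    have hbound := hR.inner_sum_smul_adjoint_le (s := Finset.univ) (fun k _ => (hω k).1.le)
      (fun k _ => hexact k) θ
    have hresidual := eq_zero_of_sum_mul_norm_sq_nonpos (fun k _ => (hω k).1)
      (neg_nonneg.1 ((hvi θstar hθstarC).trans hbound)) k (Finset.mem_univ k)
    exact sub_eq_zero.1 hresidual
  · intro hsol ϑ _
    simp [hsol]

/-- if the exact problem R(L_k θ*) = y_k (k = 1,…,K) has a solution θ* ∈ C,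
then θ ∈ C solves the variational inequality iff R(L_k θ) = y_k for every k. -/
theorem vi_exact_relaxation
    {Θ G : Type*} [NormedAddCommGroup Θ] [InnerProductSpace ℝ Θ] [FiniteDimensional ℝ Θ]
    [NormedAddCommGroup G] [InnerProductSpace ℝ G] [FiniteDimensional ℝ G]
    (K : ℕ) (hK : 0 < K)
    {C : Set Θ} (hCne : C.Nonempty) (hCcl : IsClosed C) (hCcv : Convex ℝ C)
    (L : Fin K → Θ →L[ℝ] G) (y : Fin K → G)
    (ω : Fin K → ℝ) (hω : ∀ k, ω k ∈ Set.Ioc (0 : ℝ) 1) (hωsum : ∑ k, ω k = 1)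
    (R : G → G) (hR : ∀ z₁ z₂ : G, ‖R z₁ - R z₂‖ ^ 2 ≤ ⟪z₁ - z₂, R z₁ - R z₂⟫)
    (θstar : Θ) (hθstar : θstar ∈ C ∧ ∀ k, R (L k θstar) = y k)
    (θ : Θ) (hθ : θ ∈ C) :
    (∀ ϑ ∈ C, 0 ≤ ⟪ϑ - θ, ∑ k, ω k • ContinuousLinearMap.adjoint (L k) (R (L k θ) - y k)⟫) ↔
      ∀ k, R (L k θ) = y k :=
  vi_exact_relaxation_general K L y ω hω R hR θstar hθstar θ
end
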